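/- arXiv:2202.10561 — 3 statements merged into one kernel-verified Lean document; each statement's English description precedes it below -/
import Mathlib

section
/- Let X ⊆ C([t0,θ];ℝ^n) be a set of functions, each satisfying the modulus-of-continuity bound ‖x(t1)-x(t2)‖ ≤ φ(|t1-t2|) with φ nondecreasing. Let Γ = {t0,...,tN=θ} be a uniform partition with mesh Δ, and let Z ⊆ C([t0,θ];ℝ^n) satisfy h_C(X, Z) ≤ η. Define F = {(t,x(t)) : t ∈ [t0,θ], x ∈ X} ⊆ ℝ^{n+1} and Φ = ∪_{i=0}^{N} {t_i} × Z(t_i). If Δ ≤ ε/10, φ(Δ) ≤ ε/10, and η ≤ 7ε/10, then the Hausdorff distance in ℝ^{n+1} satisfies h_{n+1}(F, Φ) ≤ ε. -/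
/-!
Every point `(t, x t)` of the funnel is matched with the node point `(tᵢ, z tᵢ)`, where `tᵢ` is a
node within `Δ` of `t` and `z ∈ Z` is within `8ε/10 > η` of `x` in the sup metric: the time coordinates
differ by at most `Δ ≤ ε/10` and the space coordinates by at most `φ Δ + 8ε/10 ≤ 9ε/10`.
Conversely a node point `(tᵢ, z tᵢ)` is matched with `(tᵢ, x tᵢ)` for some `x ∈ X` close to `z`.
The product metric on `ℝ × ℝⁿ` is the max metric, so each match is within `ε`.
-/

open Metric Set

lemma exists_nat_le_abs_sub_le {a t Δ : ℝ} {N : ℕ} (hΔ : 0 < Δ) (hat : a ≤ t)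
    (htN : t ≤ a + N * Δ) : ∃ i ≤ N, |t - (a + i * Δ)| ≤ Δ := by
  set u := (t - a) / Δ
  have hu₀ : 0 ≤ u := div_nonneg (sub_nonneg.2 hat) hΔ.le
  have huN : u ≤ N := by rw [div_le_iff₀ hΔ]; linarith
  refine ⟨⌊u⌋₊, Nat.floor_le_of_le huN, ?_⟩
  have hfloor : |u - ⌊u⌋₊| ≤ 1 := by
    rw [abs_le]
    constructor <;> linarith [Nat.floor_le hu₀, Nat.lt_floor_add_one u]
  have hsplit : t - (a + ⌊u⌋₊ * Δ) = (u - ⌊u⌋₊) * Δ := by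
    simp only [u]; field_simp; ring
  rw [hsplit, abs_mul, abs_of_pos hΔ]
  exact mul_le_of_le_one_left hΔ.le hfloor

section Funnel

variable {a b : ℝ} {E : Type*} [PseudoMetricSpace E]

lemma dist_graph_point_le (x z : C(Icc a b, E)) (s t : Icc a b) :
    dist ((s : ℝ), x s) ((t : ℝ), z t) ≤ max |(s : ℝ) - t| (dist (x s) (x t) + dist x z) := by
  rw [Prod.dist_eq, Real.dist_eq]
  gcongr
  exact (dist_triangle _ _ _).trans (by gcongr; exact ContinuousMap.dist_apply_le_dist t)

theorem hausdorffDist_funnel_nodes_le {ι : Type*} {X Z : Set C(Icc a b, E)}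
    {node : ι → Icc a b} {I : Finset ι} {δ ρ r ε : ℝ}
    (hnode : ∀ t : Icc a b, ∃ i ∈ I, |(t : ℝ) - node i| ≤ δ)
    (hmod : ∀ x ∈ X, ∀ s t : Icc a b, |(s : ℝ) - t| ≤ δ → dist (x s) (x t) ≤ ρ)
    (hfin : hausdorffEDist X Z ≠ ⊤) (hXZ : hausdorffDist X Z < r)
    (hρ : 0 ≤ ρ) (hδ : δ ≤ ε) (hρr : ρ + r ≤ ε) :
    hausdorffDist {q | ∃ x ∈ X, ∃ t : Icc a b, q = ((t : ℝ), x t)}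
      (⋃ i ∈ I, {q | ∃ z ∈ Z, q = ((node i : ℝ), z (node i))}) ≤ ε := by
  have hε : 0 ≤ ε := by linarith [hausdorffDist_nonneg.trans_lt hXZ]
  refine hausdorffDist_le_of_mem_dist hε ?_ ?_
  · rintro _ ⟨x, hx, t, rfl⟩
    obtain ⟨i, hi, hti⟩ := hnode t
    obtain ⟨z, hz, hxz⟩ := exists_dist_lt_of_hausdorffDist_lt hx hXZ hfin
    refine ⟨_, mem_biUnion hi ⟨z, hz, rfl⟩, (dist_graph_point_le x z t (node i)).trans ?_⟩
    exact max_le (hti.trans hδ) (by linarith [hmod x hx t (node i) hti])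
  · simp only [mem_iUnion, mem_ofPred_eq]
    rintro _ ⟨i, -, z, hz, rfl⟩
    obtain ⟨x, hx, hxz⟩ := exists_dist_lt_of_hausdorffDist_lt' hz hXZ hfin
    refine ⟨_, ⟨x, hx, node i, rfl⟩, ?_⟩
    rw [dist_comm]
    refine (dist_graph_point_le x z (node i) (node i)).trans (max_le ?_ ?_)
    · simpa using hε
    · linarith [dist_self (x (node i))]

end Funnel

theorem stmt_9_general {n : ℕ} (t0 θ ε Δ η : ℝ) (ht : t0 < θ) (hε : 0 < ε)
    (N : ℕ) (hN : 0 < N) (hΔ : Δ = (θ - t0) / N)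
    (φ : ℝ → ℝ) (hφmono : Monotone φ)
    (X Z : Set C(Set.Icc t0 θ, EuclideanSpace ℝ (Fin n)))
    (hmod : ∀ x ∈ X, ∀ t1 t2 : Set.Icc t0 θ, ‖x t1 - x t2‖ ≤ φ |(t1 : ℝ) - (t2 : ℝ)|)
    (hfin : EMetric.hausdorffEdist X Z ≠ ⊤)
    (hXZ : Metric.hausdorffDist X Z ≤ η)
    (node : ℕ → Set.Icc t0 θ)
    (hnode : ∀ i : ℕ, i ≤ N → ((node i : ℝ) = t0 + i * Δ))
    (F Φ : Set (ℝ × EuclideanSpace ℝ (Fin n)))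
    (hF : F = {q | ∃ x ∈ X, ∃ t : Set.Icc t0 θ, q = ((t : ℝ), x t)})
    (hΦ : Φ = ⋃ i ∈ Finset.range (N + 1), {q | ∃ z ∈ Z, q = ((node i : ℝ), z (node i))})
    (h1 : Δ ≤ ε / 10) (h2 : φ Δ ≤ ε / 10) (h3 : η ≤ 7 * ε / 10) :
    Metric.hausdorffDist F Φ ≤ ε := by
  have hΔpos : 0 < Δ := hΔ ▸ div_pos (sub_pos.2 ht) (Nat.cast_pos.2 hN)
  have hcover : ∀ t : Icc t0 θ, ∃ i ∈ Finset.range (N + 1), |(t : ℝ) - node i| ≤ Δ := by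
    intro t
    have hend : θ = t0 + N * Δ := by rw [hΔ]; field_simp; ring
    obtain ⟨i, hiN, hti⟩ := exists_nat_le_abs_sub_le hΔpos t.2.1 (t.2.2.trans_eq hend)
    exact ⟨i, Finset.mem_range_succ_iff.2 hiN, by rwa [hnode i hiN]⟩
  have hmodΔ : ∀ x ∈ X, ∀ s t : Icc t0 θ, |(s : ℝ) - t| ≤ Δ → dist (x s) (x t) ≤ ε / 10 :=
    fun x hx s t hst => by
      rw [dist_eq_norm]
      exact (hmod x hx s t).trans ((hφmono hst).trans h2)
  subst hF hΦ
  exact hausdorffDist_funnel_nodes_le (r := 8 * ε / 10) hcover hmodΔ hfin (by linarith)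
    (by positivity) (by linarith) (by linarith)

theorem stmt_9 {n : ℕ} (t0 θ ε Δ η : ℝ) (ht : t0 < θ) (hε : 0 < ε)
    (N : ℕ) (hN : 0 < N) (hΔ : Δ = (θ - t0) / N)
    (φ : ℝ → ℝ) (hφmono : Monotone φ)
    (X Z : Set C(Set.Icc t0 θ, EuclideanSpace ℝ (Fin n)))
    (hXne : X.Nonempty) (hZne : Z.Nonempty)
    (hmod : ∀ x ∈ X, ∀ t1 t2 : Set.Icc t0 θ, ‖x t1 - x t2‖ ≤ φ |(t1 : ℝ) - (t2 : ℝ)|)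
    (hfin : EMetric.hausdorffEdist X Z ≠ ⊤)
    (hXZ : Metric.hausdorffDist X Z ≤ η)
    (node : ℕ → Set.Icc t0 θ)
    (hnode : ∀ i : ℕ, i ≤ N → ((node i : ℝ) = t0 + i * Δ))
    (F Φ : Set (ℝ × EuclideanSpace ℝ (Fin n)))
    (hF : F = {q | ∃ x ∈ X, ∃ t : Set.Icc t0 θ, q = ((t : ℝ), x t)})
    (hΦ : Φ = ⋃ i ∈ Finset.range (N + 1), {q | ∃ z ∈ Z, q = ((node i : ℝ), z (node i))})
    (h1 : Δ ≤ ε / 10) (h2 : φ Δ ≤ ε / 10) (h3 : η ≤ 7 * ε / 10) :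
    Metric.hausdorffDist F Φ ≤ ε :=
  stmt_9_general t0 θ ε Δ η ht hε N hN hΔ φ hφmono X Z hmod hfin hXZ node hnode F Φ hF hΦ h1 h2 h3
end

section
/- Let u, v : [t0,θ] → ℝ^m be measurable controls with ∫_{t0}^{θ}‖u(t) - v(t)‖ dt ≤ η, and suppose x, y are absolutely continuous solutions of ẋ = f(t,x,u), ẏ = f(t,y,v) with x(t0) = y(t0) = x0, where f satisfies ‖f(t,x1,u1) - f(t,x2,u2)‖ ≤ [γ1 + γ2(‖u1‖+‖u2‖)]‖x1 - x2‖ + γ3‖u1 - u2‖, and ∫_{t0}^{θ}(‖u‖+‖v‖) ≤ 2rl*. Then ‖x(t) - y(t)‖ ≤ γ3 η · exp(γ1(θ-t0) + 2γ2 r l*) for every t ∈ [t0,θ]. -/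
/-!
By the Lipschitz-type bound on `f`, the distance `G t = ‖x t - y t‖` satisfies
`G t ≤ γ3 η + ∫_{t0}^t a G` with the merely integrable weight `a = γ1 + γ2 (‖u‖ + ‖v‖)`,
whose total integral is at most `γ1 (θ - t0) + 2 γ2 r l`. Gronwall's inequality for such a
weight comes from the integrating factor: with `W t = ∫_{t0}^t a`, the function
`(γ3 η + ∫_{t0}^t a G) * exp (-W t)` is absolutely continuous with a.e. derivative
`a (G - (γ3 η + ∫ a G)) exp (-W) ≤ 0`, so it never exceeds its initial value `γ3 η`.
-/

open MeasureTheory Set intervalIntegral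

theorem AbsolutelyContinuousOnInterval.comp_lipschitzOnWith {X Y : Type*} [PseudoMetricSpace X]
    [PseudoMetricSpace Y] {f : ℝ → X} {g : X → Y} {a b : ℝ} {K : NNReal} {s : Set X}
    (hf : AbsolutelyContinuousOnInterval f a b) (hg : LipschitzOnWith K g s)
    (hfs : MapsTo f (uIcc a b) s) : AbsolutelyContinuousOnInterval (g ∘ f) a b := by
  unfold AbsolutelyContinuousOnInterval at hf ⊢
  apply squeeze_zero' ?_ ?_ (by simpa using hf.const_mul (K : ℝ))
  · exact Filter.Eventually.of_forall fun _ ↦ Finset.sum_nonneg fun _ _ ↦ dist_nonneg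
  rw [Filter.eventually_inf_principal]
  filter_upwards with E hE
  rw [Finset.mul_sum]
  exact Finset.sum_le_sum fun i hi ↦ hg.dist_le_mul _ (hfs (hE.1 i hi).1) _ (hfs (hE.1 i hi).2)

theorem Real.lipschitzOnWith_exp_Iic_zero : LipschitzOnWith 1 Real.exp (Iic 0) :=
  (convex_Iic 0).lipschitzOnWith_of_nnnorm_hasDerivWithin_le
    (fun x _ ↦ (Real.hasDerivAt_exp x).hasDerivWithinAt) fun x hx ↦ by
      rw [← NNReal.coe_le_coe, coe_nnnorm, Real.norm_of_nonneg (Real.exp_pos x).le]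
      simpa using hx

theorem le_mul_exp_integral_of_le_add_integral_mul {w g : ℝ → ℝ} {a b c : ℝ}
    (hw : IntervalIntegrable w volume a b)
    (hwg : IntervalIntegrable (fun s ↦ w s * g s) volume a b)
    (hw0 : ∀ s ∈ Icc a b, 0 ≤ w s)
    (hg : ∀ t ∈ Icc a b, g t ≤ c + ∫ s in a..t, w s * g s) :
    ∀ t ∈ Icc a b, g t ≤ c * Real.exp (∫ s in a..t, w s) := by
  intro t ht
  have hsub : uIcc a t ⊆ uIcc a b := uIcc_subset_uIcc_left (mem_uIcc_of_le ht.1 ht.2)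
  set W : ℝ → ℝ := fun τ ↦ ∫ s in a..τ, w s
  set h : ℝ → ℝ := fun τ ↦ c + ∫ s in a..τ, w s * g s
  set φ : ℝ → ℝ := fun τ ↦ h τ * Real.exp (-W τ)
  have hW_ac : AbsolutelyContinuousOnInterval W a t :=
    (hw.mono_set hsub).absolutelyContinuousOnInterval_intervalIntegral left_mem_uIcc
  have hW_nonneg : ∀ s ∈ uIcc a t, 0 ≤ W s := fun s hs ↦ by
    rw [uIcc_of_le ht.1] at hs
    exact integral_nonneg hs.1 fun r hr ↦ hw0 r ⟨hr.1, hr.2.trans (hs.2.trans ht.2)⟩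
  have hφ_ac : AbsolutelyContinuousOnInterval φ a t := by
    refine .mul ?_ ?_
    · exact (LipschitzWith.const c).lipschitzOnWith.absolutelyContinuousOnInterval.fun_add
        ((hwg.mono_set hsub).absolutelyContinuousOnInterval_intervalIntegral left_mem_uIcc)
    -- `g := Real.exp` is needed: otherwise unification unfolds `Real.exp` to `Complex.exp`.
    · exact hW_ac.fun_neg.comp_lipschitzOnWith (g := Real.exp) Real.lipschitzOnWith_exp_Iic_zero
        fun s hs ↦ neg_nonpos.2 (hW_nonneg s hs)
  have hφ_deriv : ∀ᵐ s, s ∈ Icc a t → deriv φ s ≤ 0 := by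
    filter_upwards [(hw.mono_set hsub).ae_hasDerivAt_integral,
      (hwg.mono_set hsub).ae_hasDerivAt_integral] with s hW hH hs
    have hs' : s ∈ uIcc a t := Icc_subset_uIcc hs
    have hsb : s ∈ Icc a b := ⟨hs.1, hs.2.trans ht.2⟩
    have hφ : HasDerivAt φ (w s * g s * Real.exp (-W s) + h s * (Real.exp (-W s) * -w s)) s :=
      ((hH hs' a left_mem_uIcc).const_add c).mul (hW hs' a left_mem_uIcc).neg.exp
    calc deriv φ s = -(w s * (h s - g s)) * Real.exp (-W s) := by rw [hφ.deriv]; ring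
      _ ≤ 0 := mul_nonpos_of_nonpos_of_nonneg
          (neg_nonpos.2 (mul_nonneg (hw0 s hsb) (sub_nonneg.2 (hg s hsb)))) (Real.exp_pos _).le
  have hφ_le : φ t ≤ c := by
    have hint : ∫ s in a..t, deriv φ s ≤ ∫ _ in a..t, (0 : ℝ) :=
      integral_mono_ae_restrict ht.1 hφ_ac.intervalIntegrable_deriv intervalIntegrable_const
        ((ae_restrict_iff' measurableSet_Icc).2 hφ_deriv)
    rw [hφ_ac.integral_deriv_eq_sub, intervalIntegral.integral_zero] at hint
    simpa [φ, h, W] using hint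
  calc g t ≤ h t := hg t ht
    _ = φ t * Real.exp (W t) := by simp [φ, mul_assoc, ← Real.exp_add]
    _ ≤ c * Real.exp (W t) := by gcongr

section IntegralEquation

variable {E : Type*} [NormedAddCommGroup E] [NormedSpace ℝ E] {x y F H : ℝ → E} {x0 : E}
  {t0 θ : ℝ}

theorem continuousOn_of_eq_add_integral (hF : IntervalIntegrable F volume t0 θ)
    (hx : ∀ t ∈ Icc t0 θ, x t = x0 + ∫ s in t0..t, F s) : ContinuousOn x (Icc t0 θ) := by
  rcases le_total t0 θ with hθ | hθ
  · rw [← uIcc_of_le hθ]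
    refine ((continuousOn_primitive_interval' hF left_mem_uIcc).const_add x0).congr fun t ht ↦ ?_
    exact hx t (uIcc_of_le hθ ▸ ht)
  · exact (subsingleton_Icc_of_ge hθ).continuousOn x

theorem norm_sub_le_integral_add_integral_of_eq_add_integral {k e : ℝ → ℝ}
    (hF : IntervalIntegrable F volume t0 θ) (hH : IntervalIntegrable H volume t0 θ)
    (hk : IntervalIntegrable (fun s ↦ k s * ‖x s - y s‖) volume t0 θ)
    (he : IntervalIntegrable e volume t0 θ)
    (hx : ∀ t ∈ Icc t0 θ, x t = x0 + ∫ s in t0..t, F s)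
    (hy : ∀ t ∈ Icc t0 θ, y t = x0 + ∫ s in t0..t, H s)
    (hFH : ∀ s ∈ Icc t0 θ, ‖F s - H s‖ ≤ k s * ‖x s - y s‖ + e s) :
    ∀ t ∈ Icc t0 θ,
      ‖x t - y t‖ ≤ (∫ s in t0..t, e s) + ∫ s in t0..t, k s * ‖x s - y s‖ := by
  intro t ht
  have hsub : uIcc t0 t ⊆ uIcc t0 θ := uIcc_subset_uIcc_left (mem_uIcc_of_le ht.1 ht.2)
  rw [hx t ht, hy t ht, add_sub_add_left_eq_sub, ← integral_sub (hF.mono_set hsub)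
    (hH.mono_set hsub), add_comm, ← integral_add (hk.mono_set hsub) (he.mono_set hsub)]
  exact (intervalIntegral.norm_integral_le_integral_norm ht.1).trans
    (integral_mono_on ht.1 ((hF.sub hH).mono_set hsub).norm
      ((hk.add he).mono_set hsub) fun s hs ↦ hFH s ⟨hs.1, hs.2.trans ht.2⟩)

end IntegralEquation

theorem stmt_13_general {n m : ℕ} (t0 θ γ1 γ2 γ3 r l η α : ℝ)
    (hγ1 : 0 < γ1) (hγ2 : 0 < γ2) (hγ3 : 0 < γ3)
    (hη : 0 ≤ η)
    (f : ℝ → EuclideanSpace ℝ (Fin n) → EuclideanSpace ℝ (Fin m) → EuclideanSpace ℝ (Fin n))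
    (x y : ℝ → EuclideanSpace ℝ (Fin n)) (u v : ℝ → EuclideanSpace ℝ (Fin m))
    (x0 : EuclideanSpace ℝ (Fin n))
    (hf : ∀ t ∈ Set.Icc t0 θ, ∀ x1 x2 : EuclideanSpace ℝ (Fin n),
      ∀ u1 u2 : EuclideanSpace ℝ (Fin m), ‖x1‖ ≤ α → ‖x2‖ ≤ α →
      ‖f t x1 u1 - f t x2 u2‖ ≤ (γ1 + γ2 * (‖u1‖ + ‖u2‖)) * ‖x1 - x2‖ + γ3 * ‖u1 - u2‖)
    (hxb : ∀ t ∈ Set.Icc t0 θ, ‖x t‖ ≤ α)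
    (hyb : ∀ t ∈ Set.Icc t0 θ, ‖y t‖ ≤ α)
    (hx : ∀ t ∈ Set.Icc t0 θ, x t = x0 + ∫ s in t0..t, f s (x s) (u s))
    (hy : ∀ t ∈ Set.Icc t0 θ, y t = x0 + ∫ s in t0..t, f s (y s) (v s))
    (hxint : IntervalIntegrable (fun s => f s (x s) (u s)) volume t0 θ)
    (hyint : IntervalIntegrable (fun s => f s (y s) (v s)) volume t0 θ)
    (huvint : IntervalIntegrable (fun s => ‖u s - v s‖) volume t0 θ)
    (hsumint : IntervalIntegrable (fun s => ‖u s‖ + ‖v s‖) volume t0 θ)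
    (huv : (∫ t in t0..θ, ‖u t - v t‖) ≤ η)
    (hsum : (∫ t in t0..θ, (‖u t‖ + ‖v t‖)) ≤ 2 * r * l) :
    ∀ t ∈ Set.Icc t0 θ,
      ‖x t - y t‖ ≤ γ3 * η * Real.exp (γ1 * (θ - t0) + 2 * γ2 * r * l) := by
  intro t ht
  set a : ℝ → ℝ := fun s ↦ γ1 + γ2 * (‖u s‖ + ‖v s‖)
  have ha_int : IntervalIntegrable a volume t0 θ :=
    intervalIntegrable_const.add (hsumint.const_mul γ2)
  have ha_nonneg : ∀ s, 0 ≤ a s := fun s ↦ by positivity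
  have haG : IntervalIntegrable (fun s ↦ a s * ‖x s - y s‖) volume t0 θ :=
    ha_int.mul_continuousOn <| uIcc_of_le (ht.1.trans ht.2) ▸
      ((continuousOn_of_eq_add_integral hxint hx).sub
        (continuousOn_of_eq_add_integral hyint hy)).norm
  have hdist : ∀ s ∈ Icc t0 θ, ‖x s - y s‖ ≤ γ3 * η + ∫ τ in t0..s, a τ * ‖x τ - y τ‖ := by
    intro s hs
    refine (norm_sub_le_integral_add_integral_of_eq_add_integral hxint hyint haG
      (huvint.const_mul γ3) hx hy (fun τ hτ ↦ hf τ hτ _ _ _ _ (hxb τ hτ) (hyb τ hτ))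
      s hs).trans ?_
    rw [intervalIntegral.integral_const_mul]
    gcongr
    exact (integral_mono_interval le_rfl hs.1 hs.2
      (Filter.Eventually.of_forall fun _ ↦ norm_nonneg _) huvint).trans huv
  have ha_bound : ∫ s in t0..θ, a s ≤ γ1 * (θ - t0) + 2 * γ2 * r * l := by
    rw [integral_add intervalIntegrable_const (hsumint.const_mul γ2),
      intervalIntegral.integral_const_mul, intervalIntegral.integral_const, smul_eq_mul]
    nlinarith
  calc ‖x t - y t‖ ≤ γ3 * η * Real.exp (∫ s in t0..t, a s) :=
        le_mul_exp_integral_of_le_add_integral_mul ha_int haG (fun s _ ↦ ha_nonneg s) hdist t ht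
    _ ≤ γ3 * η * Real.exp (∫ s in t0..θ, a s) := by
        gcongr
        exact integral_mono_interval le_rfl ht.1 ht.2
          (Filter.Eventually.of_forall ha_nonneg) ha_int
    _ ≤ _ := by gcongr

theorem stmt_13 {n m : ℕ} (t0 θ γ1 γ2 γ3 r l η α : ℝ) (ht : t0 < θ)
    (hγ1 : 0 < γ1) (hγ2 : 0 < γ2) (hγ3 : 0 < γ3) (hr : 0 < r) (hl : 0 < l)
    (hη : 0 ≤ η) (hα : 0 < α)
    (f : ℝ → EuclideanSpace ℝ (Fin n) → EuclideanSpace ℝ (Fin m) → EuclideanSpace ℝ (Fin n))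
    (x y : ℝ → EuclideanSpace ℝ (Fin n)) (u v : ℝ → EuclideanSpace ℝ (Fin m))
    (x0 : EuclideanSpace ℝ (Fin n))
    (hu_meas : Measurable u) (hv_meas : Measurable v)
    (hf : ∀ t ∈ Set.Icc t0 θ, ∀ x1 x2 : EuclideanSpace ℝ (Fin n),
      ∀ u1 u2 : EuclideanSpace ℝ (Fin m), ‖x1‖ ≤ α → ‖x2‖ ≤ α →
      ‖f t x1 u1 - f t x2 u2‖ ≤ (γ1 + γ2 * (‖u1‖ + ‖u2‖)) * ‖x1 - x2‖ + γ3 * ‖u1 - u2‖)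
    (hxb : ∀ t ∈ Set.Icc t0 θ, ‖x t‖ ≤ α)
    (hyb : ∀ t ∈ Set.Icc t0 θ, ‖y t‖ ≤ α)
    (hx : ∀ t ∈ Set.Icc t0 θ, x t = x0 + ∫ s in t0..t, f s (x s) (u s))
    (hy : ∀ t ∈ Set.Icc t0 θ, y t = x0 + ∫ s in t0..t, f s (y s) (v s))
    (hxint : IntervalIntegrable (fun s => f s (x s) (u s)) volume t0 θ)
    (hyint : IntervalIntegrable (fun s => f s (y s) (v s)) volume t0 θ)
    (huvint : IntervalIntegrable (fun s => ‖u s - v s‖) volume t0 θ)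
    (hsumint : IntervalIntegrable (fun s => ‖u s‖ + ‖v s‖) volume t0 θ)
    (huv : (∫ t in t0..θ, ‖u t - v t‖) ≤ η)
    (hsum : (∫ t in t0..θ, (‖u t‖ + ‖v t‖)) ≤ 2 * r * l) :
    ∀ t ∈ Set.Icc t0 θ,
      ‖x t - y t‖ ≤ γ3 * η * Real.exp (γ1 * (θ - t0) + 2 * γ2 * r * l) :=
  stmt_13_general t0 θ γ1 γ2 γ3 r l η α hγ1 hγ2 hγ3 hη f x y u v x0 hf hxb hyb hx hy hxint hyint
    huvint hsumint huv hsum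
end

section
/- Let x solve ẋ = f(t, x, u) on [t0,θ] with constant control u_i on each [t_i, t_{i+1}] of a uniform partition with mesh Δ, where ‖x(t)‖ ≤ α*, ‖u_i‖ ≤ β, and ‖x(t)-x(s)‖ ≤ φ*(Δ) for |t-s| ≤ Δ with Δ ≤ φ*(Δ). Let z be the Euler broken line z(t) = z(t_i) + (t - t_i) f(t_i, x(t_i), u_i) on [t_i,t_{i+1}], z(t0) = x(t0). Assume f satisfies ‖f(t,x1,u) - f(t,x2,u)‖ ≤ g‖x1-x2‖ for ‖x1‖,‖x2‖ ≤ α*+1, ‖u‖ ≤ β, and let ω = ω(φ*(Δ), β) be the modulus of continuity of f over the compact set as in the paper. Then ‖x(t) - z(t)‖ ≤ ω(θ - t0) exp(g(θ - t0)) for all t ∈ [t0,θ]. -/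
open MeasureTheory Set

/-!
The Euler slopes are evaluated along the true trajectory `x`, so errors do not propagate from
one cell to the next: on a cell, `x - z` changes by the integral of
`f s (x s) uᵢ - f tᵢ (x tᵢ) uᵢ`, which the modulus of continuity bounds by `ω` per unit time.
Hence `‖x t - z t‖ ≤ ω (t - t0)`, which is below the claimed bound since the exponential is `≥ 1`.
-/

theorem norm_add_integral_sub_add_smul_le {E : Type*} [NormedAddCommGroup E] [NormedSpace ℝ E]
    [CompleteSpace E] (p q c : E) {F : ℝ → E} {a t ω : ℝ} (hat : a ≤ t)
    (hF : IntervalIntegrable F volume a t)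
    (hFc : ∀ s ∈ Ioc a t, ‖F s - c‖ ≤ ω) :
    ‖(p + ∫ s in a..t, F s) - (q + (t - a) • c)‖ ≤ ‖p - q‖ + ω * (t - a) := by
  have hsplit :
      (p + ∫ s in a..t, F s) - (q + (t - a) • c) = (p - q) + ∫ s in a..t, (F s - c) := by
    rw [intervalIntegral.integral_sub hF intervalIntegrable_const, intervalIntegral.integral_const]
    abel
  have hint : ‖∫ s in a..t, (F s - c)‖ ≤ ω * |t - a| :=
    intervalIntegral.norm_integral_le_of_norm_le_const (by rwa [uIoc_of_le hat])
  rw [hsplit, ← abs_of_nonneg (sub_nonneg.mpr hat)]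
  exact (norm_add_le _ _).trans (by gcongr)

theorem exists_lt_mem_Icc_uniform_grid {t0 Δ t : ℝ} {N : ℕ} (hΔ : 0 < Δ) (hN : 0 < N)
    (ht : t ∈ Icc t0 (t0 + N * Δ)) :
    ∃ i < N, t ∈ Icc (t0 + i * Δ) (t0 + (i + 1) * Δ) := by
  set r := (t - t0) / Δ
  have hr0 : 0 ≤ r := div_nonneg (by linarith [ht.1]) hΔ.le
  have hrΔ : r * Δ = t - t0 := div_mul_cancel₀ _ hΔ.ne'
  set i := min ⌊r⌋₊ (N - 1)
  have hi_le : (i : ℝ) ≤ r := (Nat.cast_le.mpr (min_le_left _ _)).trans (Nat.floor_le hr0)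
  refine ⟨i, by omega, by nlinarith, ?_⟩
  rcases min_cases ⌊r⌋₊ (N - 1) with ⟨hi, -⟩ | ⟨hi, -⟩
  · rw [show i = ⌊r⌋₊ from hi]
    nlinarith [Nat.lt_floor_add_one r]
  · have : ((N - 1 : ℕ) : ℝ) + 1 = N := by rw [Nat.cast_sub hN]; ring
    rw [show i = N - 1 from hi, this]
    exact ht.2

theorem le_mul_sub_of_le_on_uniform_grid {e : ℝ → ℝ} {t0 Δ ω : ℝ} {N : ℕ} (hΔ : 0 < Δ)
    (hN : 0 < N) (he0 : e t0 ≤ 0)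
    (hcell : ∀ i < N, ∀ t ∈ Icc (t0 + i * Δ) (t0 + (i + 1) * Δ),
      e t ≤ e (t0 + i * Δ) + ω * (t - (t0 + i * Δ))) :
    ∀ t ∈ Icc t0 (t0 + N * Δ), e t ≤ ω * (t - t0) := by
  have hnode : ∀ i ≤ N, e (t0 + i * Δ) ≤ ω * (i * Δ) := by
    intro i
    induction i with
    | zero => simpa using he0
    | succ k ih =>
      intro hk
      have hend : t0 + (k + 1) * Δ ∈ Icc (t0 + k * Δ) (t0 + (k + 1) * Δ) :=
        ⟨by linarith, le_rfl⟩
      have := hcell k hk _ hend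
      push_cast
      linarith [ih (Nat.le_of_succ_le hk)]
  intro t ht
  obtain ⟨i, hi, hti⟩ := exists_lt_mem_Icc_uniform_grid hΔ hN ht
  linarith [hcell i hi t hti, hnode i hi.le]
theorem stmt_18_general {n m : ℕ} (t0 θ Δ α β g ω φΔ : ℝ) (ht : t0 < θ)
    (hg : 0 < g) (hω : 0 ≤ ω)
    (N : ℕ) (hN : 0 < N) (hΔ : Δ = (θ - t0) / N) (hΔφ : Δ ≤ φΔ)
    (f : ℝ → EuclideanSpace ℝ (Fin n) → EuclideanSpace ℝ (Fin m) → EuclideanSpace ℝ (Fin n))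
    (x z : ℝ → EuclideanSpace ℝ (Fin n)) (u : ℕ → EuclideanSpace ℝ (Fin m))
    (hub : ∀ i < N, ‖u i‖ ≤ β)
    (hxb : ∀ t ∈ Set.Icc t0 θ, ‖x t‖ ≤ α)
    (hxmod : ∀ t ∈ Set.Icc t0 θ, ∀ s ∈ Set.Icc t0 θ, |t - s| ≤ Δ → ‖x t - x s‖ ≤ φΔ)
    (hx : ∀ i < N, ∀ t ∈ Set.Icc (t0 + i * Δ) (t0 + (i + 1) * Δ),
      x t = x (t0 + i * Δ) + ∫ s in (t0 + i * Δ)..t, f s (x s) (u i))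
    (hxint : ∀ i < N, IntervalIntegrable (fun s => f s (x s) (u i)) volume
      (t0 + i * Δ) (t0 + (i + 1) * Δ))
    (hz0 : z t0 = x t0)
    (hz : ∀ i < N, ∀ t ∈ Set.Icc (t0 + i * Δ) (t0 + (i + 1) * Δ),
      z t = z (t0 + i * Δ) + (t - (t0 + i * Δ)) • f (t0 + i * Δ) (x (t0 + i * Δ)) (u i))
    (hfω : ∀ t1 ∈ Set.Icc t0 θ, ∀ t2 ∈ Set.Icc t0 θ,
      ∀ x1 x2 : EuclideanSpace ℝ (Fin n), ∀ u' : EuclideanSpace ℝ (Fin m),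
      ‖x1‖ ≤ α → ‖x2‖ ≤ α → ‖u'‖ ≤ β → |t1 - t2| ≤ φΔ → ‖x1 - x2‖ ≤ φΔ →
      ‖f t1 x1 u' - f t2 x2 u'‖ ≤ ω) :
    ∀ t ∈ Set.Icc t0 θ, ‖x t - z t‖ ≤ ω * (θ - t0) * Real.exp (g * (θ - t0)) := by
  have hΔpos : 0 < Δ := hΔ ▸ div_pos (sub_pos.mpr ht) (Nat.cast_pos.mpr hN)
  have hθ : t0 + N * Δ = θ := by rw [hΔ]; field_simp; ring
  have hlinear : ∀ t ∈ Icc t0 θ, ‖x t - z t‖ ≤ ω * (t - t0) := by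
    rw [← hθ]
    refine le_mul_sub_of_le_on_uniform_grid hΔpos hN (by simp [hz0]) fun i hi t ht => ?_
    have hiN : (i : ℝ) + 1 ≤ N := by exact_mod_cast hi
    have hcell : Icc (t0 + i * Δ) (t0 + (i + 1) * Δ) ⊆ Icc t0 θ :=
      Icc_subset_Icc (by nlinarith) (by nlinarith)
    rw [hx i hi t ht, hz i hi t ht]
    refine norm_add_integral_sub_add_smul_le _ _ _ ht.1 ((hxint i hi).mono_set ?_) ?_
    · rw [uIcc_of_le ht.1, uIcc_of_le (ht.1.trans ht.2)]
      exact Icc_subset_Icc le_rfl ht.2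
    · intro s hs
      have hsi : s ∈ Icc (t0 + i * Δ) (t0 + (i + 1) * Δ) := ⟨hs.1.le, hs.2.trans ht.2⟩
      have hnode : t0 + i * Δ ∈ Icc (t0 + i * Δ) (t0 + (i + 1) * Δ) := ⟨le_rfl, by nlinarith⟩
      have hdist : |s - (t0 + i * Δ)| ≤ Δ := by
        rw [abs_of_nonneg (by linarith [hs.1])]; linarith [hsi.2]
      exact hfω s (hcell hsi) _ (hcell hnode) _ _ _ (hxb s (hcell hsi)) (hxb _ (hcell hnode))
        (hub i hi) (hdist.trans hΔφ) (hxmod s (hcell hsi) _ (hcell hnode) hdist)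
  intro t htI
  calc ‖x t - z t‖ ≤ ω * (t - t0) := hlinear t htI
    _ ≤ ω * (θ - t0) := by gcongr; exact htI.2
    _ ≤ ω * (θ - t0) * Real.exp (g * (θ - t0)) :=
      le_mul_of_one_le_right (by nlinarith) (Real.one_le_exp (by nlinarith))

theorem stmt_18 {n m : ℕ} (t0 θ Δ α β g ω φΔ : ℝ) (ht : t0 < θ)
    (hα : 0 < α) (hβ : 0 < β) (hg : 0 < g) (hω : 0 ≤ ω)
    (N : ℕ) (hN : 0 < N) (hΔ : Δ = (θ - t0) / N) (hΔφ : Δ ≤ φΔ)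
    (f : ℝ → EuclideanSpace ℝ (Fin n) → EuclideanSpace ℝ (Fin m) → EuclideanSpace ℝ (Fin n))
    (x z : ℝ → EuclideanSpace ℝ (Fin n)) (u : ℕ → EuclideanSpace ℝ (Fin m))
    (hub : ∀ i < N, ‖u i‖ ≤ β)
    (hxb : ∀ t ∈ Set.Icc t0 θ, ‖x t‖ ≤ α)
    (hxmod : ∀ t ∈ Set.Icc t0 θ, ∀ s ∈ Set.Icc t0 θ, |t - s| ≤ Δ → ‖x t - x s‖ ≤ φΔ)
    (hx : ∀ i < N, ∀ t ∈ Set.Icc (t0 + i * Δ) (t0 + (i + 1) * Δ),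
      x t = x (t0 + i * Δ) + ∫ s in (t0 + i * Δ)..t, f s (x s) (u i))
    (hxint : ∀ i < N, IntervalIntegrable (fun s => f s (x s) (u i)) volume
      (t0 + i * Δ) (t0 + (i + 1) * Δ))
    (hz0 : z t0 = x t0)
    (hz : ∀ i < N, ∀ t ∈ Set.Icc (t0 + i * Δ) (t0 + (i + 1) * Δ),
      z t = z (t0 + i * Δ) + (t - (t0 + i * Δ)) • f (t0 + i * Δ) (x (t0 + i * Δ)) (u i))
    (hflip : ∀ t ∈ Set.Icc t0 θ, ∀ x1 x2 : EuclideanSpace ℝ (Fin n),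
      ∀ u' : EuclideanSpace ℝ (Fin m), ‖x1‖ ≤ α + 1 → ‖x2‖ ≤ α + 1 → ‖u'‖ ≤ β →
      ‖f t x1 u' - f t x2 u'‖ ≤ g * ‖x1 - x2‖)
    (hfω : ∀ t1 ∈ Set.Icc t0 θ, ∀ t2 ∈ Set.Icc t0 θ,
      ∀ x1 x2 : EuclideanSpace ℝ (Fin n), ∀ u' : EuclideanSpace ℝ (Fin m),
      ‖x1‖ ≤ α → ‖x2‖ ≤ α → ‖u'‖ ≤ β → |t1 - t2| ≤ φΔ → ‖x1 - x2‖ ≤ φΔ →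
      ‖f t1 x1 u' - f t2 x2 u'‖ ≤ ω) :
    ∀ t ∈ Set.Icc t0 θ, ‖x t - z t‖ ≤ ω * (θ - t0) * Real.exp (g * (θ - t0)) :=
  stmt_18_general t0 θ Δ α β g ω φΔ ht hg hω N hN hΔ hΔφ f x z u hub hxb hxmod hx hxint hz0 hz hfω
end
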